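/- arXiv:1903.00581 — 2 statements merged into one kernel-verified Lean document; each statement's English description precedes it below -/
import Mathlib

section
/- In a cycle graph with positive edge weights, total edge weight C, and maximum edge weight c_max, every closed walk that starts and ends at the same vertex and visits every vertex has cost at least min(C, 2(C − c_max)). -/
/-- A cycle graph: a finite connected simple graph with at least 3 vertices in
which every vertex has degree 2. -/
def IsCycleGraph {V : Type*} [Fintype V] (G : SimpleGraph V) [DecidableRel G.Adj] : Prop :=
  G.Connected ∧ 3 ≤ Fintype.card V ∧ ∀ v : V, G.degree v = 2

/-- The cost of a walk: the sum of the weights of the edges it traverses,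
counted with multiplicity. -/
def walkCost {V : Type*} {G : SimpleGraph V} (c : Sym2 V → ℝ) {u v : V}
    (p : G.Walk u v) : ℝ :=
  (p.edges.map c).sum

/-!
If the walk traverses every edge, its cost is at least `C`. Otherwise it misses some edge `e₀`.
Every cycle of a connected 2-regular graph uses all of its edges, so `G - e₀` is acyclic and each
of its edges is a bridge. The walk lives in `G - e₀` and passes through both ends of every edge,
and a closed walk through both ends of a bridge crosses it at least twice (once to reach the far
end, once to come back). Hence the cost is at least `2 (C - c e₀) ≥ 2 (C - cmax)`.
-/

namespace SimpleGraph

variable {V : Type*} {G : SimpleGraph V}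

lemma IsRegularOfDegree.isCycles [LocallyFinite G] (h : G.IsRegularOfDegree 2) : G.IsCycles :=
  fun v _ => by
    rw [Set.ncard_eq_toFinset_card', ← neighborFinset_def, card_neighborFinset_eq_degree, h v]

lemma Walk.IsCycle.mem_edges_of_isCycles [LocallyFinite G] (hconn : G.Preconnected)
    (hcyc : G.IsCycles) {u : V} {p : G.Walk u u} (hp : p.IsCycle) {e : Sym2 V}
    (he : e ∈ G.edgeSet) : e ∈ p.edges := by
  have hsat : ∀ v ∈ p.toSubgraph.verts, ∀ w, G.Adj v w → p.toSubgraph.Adj v w :=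
    fun v hv w => (hp.adj_toSubgraph_iff_of_isCycles hcyc hv w).2
  induction e using Sym2.ind with
  | _ x y =>
    have hx : x ∈ p.toSubgraph.verts :=
      (hconn u x).mem_subgraphVerts hsat p.start_mem_verts_toSubgraph
    rw [← Walk.mem_edges_toSubgraph]
    exact hsat x hx y he

lemma IsCycles.isAcyclic_deleteEdges [LocallyFinite G] (hconn : G.Preconnected)
    (hcyc : G.IsCycles) {e : Sym2 V} (he : e ∈ G.edgeSet) : (G.deleteEdges {e}).IsAcyclic := by
  intro u p hp
  have hmem := (hp.mapLe (G.deleteEdges_le {e})).mem_edges_of_isCycles hconn hcyc he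
  rw [Walk.edges_mapLe_eq_edges] at hmem
  simpa using p.edges_subset_edgeSet hmem

lemma IsBridge.two_le_count_edges [DecidableEq V] {a b u : V} (hbr : G.IsBridge s(a, b))
    (w : G.Walk u u) (ha : a ∈ w.support) (hb : b ∈ w.support) :
    2 ≤ w.edges.count s(a, b) := by
  set w' := w.rotate a ha
  have hb' : b ∈ w'.support := (w.mem_support_rotate_iff a ha).2 hb
  have h₁ := isBridge_iff_forall_walk_mem_edges.1 hbr (w'.takeUntil b hb')
  have h₂ : s(a, b) ∈ (w'.dropUntil b hb').edges := by
    simpa using isBridge_iff_forall_walk_mem_edges.1 hbr (w'.dropUntil b hb').reverse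
  calc 2 ≤ (w'.takeUntil b hb').edges.count s(a, b)
        + (w'.dropUntil b hb').edges.count s(a, b) := by
        have := List.count_pos_iff.2 h₁
        have := List.count_pos_iff.2 h₂
        omega
    _ = w'.edges.count s(a, b) := by
        rw [← List.count_append, ← Walk.edges_append, Walk.take_spec]
    _ = w.edges.count s(a, b) := (w.rotate_edges a ha).perm.count_eq _

lemma IsCycles.two_le_count_edges_of_notMem_edges [DecidableEq V] [LocallyFinite G]
    (hconn : G.Preconnected) (hcyc : G.IsCycles) {u : V} (w : G.Walk u u)
    (hspan : ∀ v, v ∈ w.support) {e₀ e : Sym2 V} (he₀ : e₀ ∈ G.edgeSet)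
    (hw₀ : e₀ ∉ w.edges) (he : e ∈ G.edgeSet) (hne : e ≠ e₀) :
    2 ≤ w.edges.count e := by
  have hbridge : (G.deleteEdges {e₀}).IsBridge e :=
    isAcyclic_iff_forall_isBridge.1 (hcyc.isAcyclic_deleteEdges hconn he₀)
      (by simp [edgeSet_deleteEdges, he, hne])
  let w₀ := w.toDeleteEdges {e₀} fun e he h => hw₀ (Set.mem_singleton_iff.1 h ▸ he)
  induction e using Sym2.ind with
  | _ a b =>
    have hspan₀ : ∀ v, v ∈ w₀.support := by simp [w₀, hspan]
    simpa [w₀] using hbridge.two_le_count_edges w₀ (hspan₀ a) (hspan₀ b)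

end SimpleGraph

open SimpleGraph

lemma sum_mul_le_walkCost {V : Type*} [DecidableEq V] {G : SimpleGraph V}
    [Fintype G.edgeSet] {c : Sym2 V → ℝ} (hc : ∀ e ∈ G.edgeSet, 0 ≤ c e) {u v : V}
    (w : G.Walk u v) (m : Sym2 V → ℝ) (hm : ∀ e ∈ G.edgeSet, m e ≤ w.edges.count e) :
    ∑ e ∈ G.edgeFinset, m e * c e ≤ walkCost c w := by
  have hsub : w.edges.toFinset ⊆ G.edgeFinset := fun e he =>
    mem_edgeFinset.2 (w.edges_subset_edgeSet (List.mem_toFinset.1 he))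
  calc ∑ e ∈ G.edgeFinset, m e * c e
        ≤ ∑ e ∈ G.edgeFinset, (w.edges.count e : ℝ) * c e :=
        Finset.sum_le_sum fun e he => by
          have he := mem_edgeFinset.1 he
          exact mul_le_mul_of_nonneg_right (hm e he) (hc e he)
    _ = ∑ e ∈ w.edges.toFinset, (w.edges.count e : ℝ) * c e :=
        (Finset.sum_subset hsub fun e _ he => by
          rw [List.count_eq_zero_of_not_mem (mt List.mem_toFinset.2 he), Nat.cast_zero,
            zero_mul]).symm
    _ = walkCost c w := by simp only [walkCost, Finset.sum_list_map_count, nsmul_eq_mul]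

/-- In a cycle graph with positive edge weights, total edge weight `C` and
maximum edge weight `cmax`, every closed spanning walk has cost at least
`min C (2 * (C - cmax))`. -/
theorem stmt_8 {V : Type*} [Fintype V] [DecidableEq V] (G : SimpleGraph V)
    [DecidableRel G.Adj] (hcyc : IsCycleGraph G)
    (c : Sym2 V → ℝ) (hc : ∀ e ∈ G.edgeSet, 0 < c e)
    (C : ℝ) (hC : C = ∑ e ∈ G.edgeFinset, c e)
    (cmax : ℝ) (hcmax : IsGreatest (c '' G.edgeSet) cmax)
    (s : V) (w : G.Walk s s) (hspan : ∀ v : V, v ∈ w.support) :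
    min C (2 * (C - cmax)) ≤ walkCost c w := by
  obtain ⟨hconn, -, hdeg⟩ := hcyc
  have hc₀ : ∀ e ∈ G.edgeSet, 0 ≤ c e := fun e he => (hc e he).le
  by_cases hall : ∀ e ∈ G.edgeSet, e ∈ w.edges
  · refine (min_le_left _ _).trans ?_
    simpa [hC] using sum_mul_le_walkCost hc₀ w 1 fun e he => by
      simpa using List.count_pos_iff.2 (hall e he)
  · push Not at hall
    obtain ⟨e₀, he₀, hw₀⟩ := hall
    have hcount : ∀ e ∈ G.edgeSet, e ≠ e₀ → 2 ≤ w.edges.count e := fun e he hne =>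
      (IsRegularOfDegree.isCycles hdeg).two_le_count_edges_of_notMem_edges
        hconn.preconnected w hspan he₀ hw₀ he hne
    calc min C (2 * (C - cmax)) ≤ 2 * (C - c e₀) := by
          linarith [min_le_right C (2 * (C - cmax)), hcmax.2 ⟨e₀, he₀, rfl⟩]
      _ = ∑ e ∈ G.edgeFinset, (if e = e₀ then 0 else 2) * c e := by
          simp only [ite_mul, zero_mul, Finset.sum_ite, Finset.sum_const_zero, zero_add,
            Finset.filter_ne', ← Finset.mul_sum, Finset.sum_erase_eq_sub (mem_edgeFinset.2 he₀),
            hC, mul_sub]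
      _ ≤ walkCost c w := sum_mul_le_walkCost hc₀ w _ fun e he => by
          split_ifs with h
          · positivity
          · exact_mod_cast hcount e he h
end

section
/- In a tadpole graph with positive edge weights, let S denote the total weight of the stem edges, C_cyc the total weight of the cycle edges, and c_max the maximum weight among the cycle edges. Then for every start vertex s, the minimum cost of a closed walk from s to s visiting every vertex equals 2S + min(C_cyc, 2(C_cyc − c_max)). -/
/-- A tadpole graph: a finite connected simple graph with exactly one vertex of
degree 1, exactly one vertex of degree 3, and all other vertices of degree 2. -/
def IsTadpole {V : Type*} [Fintype V] (G : SimpleGraph V) [DecidableRel G.Adj] : Prop :=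
  G.Connected ∧ ∃ x y : V, x ≠ y ∧ G.degree x = 1 ∧ G.degree y = 3 ∧
    ∀ v : V, v ≠ x → v ≠ y → G.degree v = 2

/-!
A tadpole has as many edges as vertices, so deleting any cycle edge `f` leaves a spanning tree.
A closed walk through every vertex crosses each bridge at least twice. If it uses every cycle
edge, its cost is at least `2S + C_cyc`; if it misses a cycle edge `f`, it lives in the tree
`G - f`, where every edge is a bridge, so its cost is at least `2(S + C_cyc - c f)`. Both bounds
are attained by depth-first tours of `G - f`: a closed one crossing every edge twice, and one
running from one end of `f` to the other along the cycle, closed up by `f`.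
-/

namespace SimpleGraph

open Walk

section Walks

variable {V : Type*} {G : SimpleGraph V}

lemma Reachable.deleteEdges_or {a z v : V} (h : G.Reachable a v) :
    (G.deleteEdges {s(a, z)}).Reachable a v ∨ (G.deleteEdges {s(a, z)}).Reachable z v := by
  classical
  obtain ⟨P, hP⟩ := h.exists_isPath
  by_cases he : s(a, z) ∈ P.edges
  · cases P with
    | nil => simp at he
    | @cons _ y _ h' P' =>
      rw [cons_isPath_iff] at hP
      have hP' : ∀ e ∈ P'.edges, a ∉ e := fun e he' ha =>
        hP.2 (mem_support_of_mem_edges he' ha)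
      obtain rfl : z = y := by
        rw [edges_cons, List.mem_cons] at he
        exact Sym2.congr_right.mp (he.resolve_right fun h => hP' _ h (Sym2.mem_mk_left a z))
      exact Or.inr ⟨P'.toDeleteEdges _ fun e he' he => hP' e he' (he ▸ Sym2.mem_mk_left a z)⟩
  · exact Or.inl ⟨P.toDeleteEdges _ fun e he' he'' => he (he'' ▸ he')⟩

lemma IsBridge.disjoint_edges_deleteEdges {a z x y : V} (hb : G.IsBridge s(a, z))
    (p : (G.deleteEdges {s(a, z)}).Walk a x) (q : (G.deleteEdges {s(a, z)}).Walk z y) :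
    p.edges.Disjoint q.edges := by
  classical
  intro e hp hq
  induction e with
  | h u v =>
    exact isBridge_iff.mp hb ((p.takeUntil u (p.fst_mem_support_of_mem_edges hp)).reachable.trans
      (q.takeUntil u (q.fst_mem_support_of_mem_edges hq)).reachable.symm)

lemma Walk.two_le_count_edges_of_isBridge [DecidableEq V] {r : V} {w : G.Walk r r}
    (hw : ∀ v, v ∈ w.support) {e : Sym2 V} (he : G.IsBridge e) : 2 ≤ w.edges.count e := by
  induction e with
  | h u v =>
    set w' := w.rotate u (hw u)
    have hv : v ∈ w'.support := (mem_support_rotate_iff ..).mpr (hw v)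
    have h₁ : s(u, v) ∈ (w'.takeUntil v hv).edges := isBridge_iff_forall_walk_mem_edges.mp he _
    have h₂ : s(u, v) ∈ (w'.dropUntil v hv).edges := by
      simpa using isBridge_iff_forall_walk_mem_edges.mp he (w'.dropUntil v hv).reverse
    calc 2 = 1 + 1 := rfl
      _ ≤ (w'.takeUntil v hv).edges.count s(u, v) + (w'.dropUntil v hv).edges.count s(u, v) :=
          add_le_add (List.count_pos_iff.mpr h₁) (List.count_pos_iff.mpr h₂)
      _ = w'.edges.count s(u, v) := by rw [← List.count_append, ← edges_append, take_spec]
      _ = w.edges.count s(u, v) := (w.rotate_edges u (hw u)).perm.count_eq _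

lemma Walk.exists_spanning_rotate {a : V} {w : G.Walk a a} (hw : ∀ v, v ∈ w.support) (s : V) :
    ∃ w' : G.Walk s s, (∀ v, v ∈ w'.support) ∧ w'.edges.Perm w.edges := by
  classical
  exact ⟨w.rotate s (hw s), fun v => (mem_support_rotate_iff ..).mpr (hw v),
    (w.rotate_edges s (hw s)).perm⟩

end Walks

section Tours

variable {V : Type*} {G : SimpleGraph V} [DecidableEq V]

def Walk.IsTourAlong {a b : V} (w p : G.Walk a b) : Prop :=
  (∀ v, G.Reachable a v → v ∈ w.support) ∧
    ∀ e, w.edges.count e ≤ if e ∈ p.edges then 1 else 2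

namespace Walk

lemma isTourAlong_nil_of_forall_not_adj {a : V} (ha : ∀ z, ¬ G.Adj a z) :
    (nil : G.Walk a a).IsTourAlong nil := by
  refine ⟨fun v ⟨q⟩ => ?_, fun e => by simp⟩
  cases q with
  | nil => simp
  | cons h _ => exact absurd h (ha _)

lemma IsTourAlong.concat {a z : V} {h : G.Adj a z} {w : G.Walk a z}
    (hw : w.IsTourAlong (cons h nil)) : (w.concat h.symm).IsTourAlong nil := by
  refine ⟨fun v hv => by simpa [support_concat] using Or.inl (hw.1 v hv), fun e => ?_⟩
  have := hw.2 e
  rw [edges_concat, List.concat_eq_append, List.count_append]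
  by_cases he : e = s(a, z)
  · simp_all [Sym2.eq_swap]
  · have : s(z, a) ≠ e := Sym2.eq_swap ▸ Ne.symm he
    simp_all

lemma IsTourAlong.cons_of_isBridge {a a' b : V} (h : G.Adj a a') (hbr : G.IsBridge s(a, a'))
    {wa : (G.deleteEdges {s(a, a')}).Walk a a} (ha : wa.IsTourAlong nil)
    {q wb : (G.deleteEdges {s(a, a')}).Walk a' b} (hb : wb.IsTourAlong q)
    {p : G.Walk a' b} (hqp : q.edges = p.edges) :
    ((wa.mapLe (deleteEdges_le _)).append
      (cons h (wb.mapLe (deleteEdges_le _)))).IsTourAlong (cons h p) := by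
  refine ⟨fun v hv => ?_, fun e => ?_⟩
  · simp only [mem_support_append_iff, support_cons, List.mem_cons, support_mapLe_eq_support]
    rcases hv.deleteEdges_or with hv | hv
    · exact Or.inl (ha.1 v hv)
    · exact Or.inr (Or.inr (hb.1 v hv))
  have hwa := ha.2 e
  have hwb := hb.2 e
  have hdq := hbr.disjoint_edges_deleteEdges wa q
  have hdb := hbr.disjoint_edges_deleteEdges wa wb
  simp only [← hqp, edges_append, edges_cons, edges_mapLe_eq_edges, List.count_append,
    List.count_cons, List.mem_cons, edges_nil, List.not_mem_nil] at hwa ⊢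
  by_cases he : e = s(a, a')
  · subst he
    have hna : s(a, a') ∉ wa.edges := fun h => by simpa using wa.edges_subset_edgeSet h
    have hnb : s(a, a') ∉ wb.edges := fun h => by simpa using wb.edges_subset_edgeSet h
    simp [List.count_eq_zero_of_not_mem hna, List.count_eq_zero_of_not_mem hnb]
  · by_cases hea : e ∈ wa.edges
    · have := List.count_eq_zero_of_not_mem (hdb hea)
      have hq : e ∉ q.edges := hdq hea
      simp_all [Ne.symm he]
    · have := List.count_eq_zero_of_not_mem hea
      split_ifs at hwb <;> simp_all [Ne.symm he]

end Walk

theorem IsAcyclic.exists_isTourAlong [Finite V] (hG : G.IsAcyclic) {a b : V}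
    (p : G.Walk a b) (hp : p.IsPath) : ∃ w : G.Walk a b, w.IsTourAlong p := by
  induction hn : G.edgeSet.ncard using Nat.strong_induction_on generalizing G a b with
  | _ n ih =>
  -- The first edge of a path in a forest is a bridge: deleting it removes an edge and splits the
  -- component of `a` into those of the edge's two ends.
  have hcons : ∀ {a a' b : V} (h : G.Adj a a') (p : G.Walk a' b), (cons h p).IsPath →
      ∃ w : G.Walk a b, w.IsTourAlong (cons h p) := by
    intro a a' b h p hp
    have hlt : (G.deleteEdges {s(a, a')}).edgeSet.ncard < n := by
      rw [← hn, edgeSet_deleteEdges]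
      exact Set.ncard_sdiff_singleton_lt_of_mem h (Set.toFinite _)
    have hG' := hG.anti (deleteEdges_le {s(a, a')})
    have hp' : ∀ e ∈ p.edges, e ∈ (G.deleteEdges {s(a, a')}).edgeSet := fun e he => by
      rw [edgeSet_deleteEdges]
      refine ⟨p.edges_subset_edgeSet he, fun he' => ?_⟩
      exact ((cons_isPath_iff _ _).mp hp).2 (p.fst_mem_support_of_mem_edges (he' ▸ he))
    obtain ⟨wa, ha⟩ := ih _ hlt hG' nil .nil rfl
    obtain ⟨wb, hb⟩ := ih _ hlt hG' (p.transfer _ hp') (hp.of_cons.transfer hp') rfl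
    exact ⟨_, ha.cons_of_isBridge h (isAcyclic_iff_forall_adj_isBridge.mp hG h) hb
      (edges_transfer _ _)⟩
  cases p with
  | cons h p => exact hcons h p hp
  | nil =>
    by_cases ha : ∃ z, G.Adj a z
    · obtain ⟨z, h⟩ := ha
      obtain ⟨w, hw⟩ := hcons h nil (by simp [h.ne])
      exact ⟨_, hw.concat⟩
    · exact ⟨nil, isTourAlong_nil_of_forall_not_adj (not_exists.mp ha)⟩

lemma IsTree.exists_walk_count_edges_le_two [Finite V] (hG : G.IsTree) (s : V) :
    ∃ w : G.Walk s s, (∀ v, v ∈ w.support) ∧ ∀ e, w.edges.count e ≤ 2 := by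
  obtain ⟨w, hspan, hcount⟩ := hG.isAcyclic.exists_isTourAlong (nil : G.Walk s s) .nil
  exact ⟨w, fun v => hspan v (hG.connected.preconnected s v), fun e => by simpa using hcount e⟩

end Tours

section Unicyclic

variable {V : Type*} {G : SimpleGraph V} [Finite V] (hG : G.Connected)
  (hcard : Nat.card G.edgeSet = Nat.card V)
include hG hcard

lemma Connected.isTree_deleteEdges {e : Sym2 V} (he : e ∈ G.edgeSet) (hb : ¬ G.IsBridge e) :
    (G.deleteEdges {e}).IsTree := by
  induction e with
  | h x y =>
    refine isTree_iff_connected_and_card.mpr ⟨hG.connected_delete_edge_of_not_isBridge hb, ?_⟩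
    rw [edgeSet_deleteEdges, Nat.card_coe_set_eq, Set.ncard_sdiff_singleton_add_one he
      (Set.toFinite _), ← Nat.card_coe_set_eq, hcard]

lemma Connected.exists_not_isBridge : ∃ e ∈ G.edgeSet, ¬ G.IsBridge e := by
  by_contra! h
  have := (isTree_iff_connected_and_card.mp ⟨hG, isAcyclic_iff_forall_isBridge.mpr h⟩).2
  omega

lemma Connected.mem_edges_of_isCycle {u : V} {C : G.Walk u u} (hC : C.IsCycle) {e : Sym2 V}
    (he : e ∈ G.edgeSet) (hb : ¬ G.IsBridge e) : e ∈ C.edges := by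
  by_contra hCe
  have hsub : ∀ f ∈ C.edges, f ∈ (G.deleteEdges {e}).edgeSet := fun f hf => by
    rw [edgeSet_deleteEdges]
    exact ⟨C.edges_subset_edgeSet hf, fun h => hCe (h ▸ hf)⟩
  exact (hG.isTree_deleteEdges hcard he hb).isAcyclic _ (hC.transfer hsub)

lemma Connected.two_le_count_edges_of_notMem [DecidableEq V] {r : V} {w : G.Walk r r}
    (hw : ∀ v, v ∈ w.support) {f : Sym2 V} (hf : f ∈ G.edgeSet) (hb : ¬ G.IsBridge f)
    (hfw : f ∉ w.edges) {e : Sym2 V} (he : e ∈ G.edgeSet) (hef : e ≠ f) :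
    2 ≤ w.edges.count e := by
  have hsub : ∀ g ∈ w.edges, g ∈ (G.deleteEdges {f}).edgeSet := fun g hg => by
    rw [edgeSet_deleteEdges]
    exact ⟨w.edges_subset_edgeSet hg, fun h => hfw (h ▸ hg)⟩
  have heT : (G.deleteEdges {f}).IsBridge e := isAcyclic_iff_forall_isBridge.mp
    (hG.isTree_deleteEdges hcard hf hb).isAcyclic (by rw [edgeSet_deleteEdges]; exact ⟨he, hef⟩)
  simpa using (w.transfer _ hsub).two_le_count_edges_of_isBridge (by simpa using hw) heT

lemma Connected.exists_walk_count_edges_le [DecidableEq V] [DecidablePred G.IsBridge] (s : V) :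
    ∃ w : G.Walk s s, (∀ v, v ∈ w.support) ∧
      ∀ e, w.edges.count e ≤ if G.IsBridge e then 2 else 1 := by
  obtain ⟨f, hf, hb⟩ := hG.exists_not_isBridge hcard
  induction f with
  | h a b =>
  have hab : G.Adj a b := hf
  have hT := hG.isTree_deleteEdges hcard hf hb
  obtain ⟨q, hq⟩ := (hT.connected.preconnected b a).exists_isPath
  obtain ⟨M, hMspan, hMcount⟩ := hT.isAcyclic.exists_isTourAlong q hq
  have hqf : s(a, b) ∉ q.edges := fun h => by simpa using q.edges_subset_edgeSet h
  have hMf : s(a, b) ∉ M.edges := fun h => by simpa using M.edges_subset_edgeSet h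
  have hC : (cons hab (q.mapLe (deleteEdges_le _))).IsCycle :=
    (cons_isCycle_iff _ _).mpr ⟨hq.mapLe _, by simpa [edges_mapLe_eq_edges] using hqf⟩
  obtain ⟨w, hw, hperm⟩ := exists_spanning_rotate (w := cons hab (M.mapLe (deleteEdges_le _)))
    (fun v => by
      rw [support_cons, support_mapLe_eq_support]
      exact List.mem_cons_of_mem _ (hMspan v (hT.connected.preconnected b v))) s
  refine ⟨w, hw, fun e => ?_⟩
  have hce := hG.mem_edges_of_isCycle hcard hC (e := e)
  have := hMcount e
  rw [hperm.count_eq, edges_cons, edges_mapLe_eq_edges]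
  by_cases he : e = s(a, b)
  · subst he
    simp [hb, List.count_eq_zero_of_not_mem hMf]
  rw [List.count_cons_of_ne (Ne.symm he)]
  by_cases hbe : G.IsBridge e
  · rw [if_pos hbe]
    exact this.trans (by split_ifs <;> omega)
  rw [if_neg hbe]
  by_cases heM : e ∈ M.edges
  · have heq : e ∈ q.edges := by
      simpa [he, edges_mapLe_eq_edges] using
        hce (edgeSet_mono (deleteEdges_le _) (M.edges_subset_edgeSet heM)) hbe
    simpa [heq] using this
  · simp [List.count_eq_zero_of_not_mem heM]

end Unicyclic

section Cost

variable {V : Type*} {G : SimpleGraph V} [DecidableEq V] [Fintype G.edgeSet]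

lemma walkCost_eq_sum_count (c : Sym2 V → ℝ) {u v : V} (w : G.Walk u v) :
    walkCost c w = ∑ e ∈ G.edgeFinset, (w.edges.count e : ℝ) * c e := by
  rw [walkCost, Finset.sum_list_map_count]
  refine (Finset.sum_subset (fun e he => ?_) fun e _ he => ?_).trans
    (Finset.sum_congr rfl fun e _ => nsmul_eq_mul _ _)
  · exact mem_edgeFinset.mpr (w.edges_subset_edgeSet (List.mem_toFinset.mp he))
  · rw [List.count_eq_zero_of_not_mem (mt List.mem_toFinset.mpr he), zero_smul]

variable {c : Sym2 V → ℝ} (hc : ∀ e ∈ G.edgeSet, 0 ≤ c e) {m : Sym2 V → ℕ} {u v : V}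
  {w : G.Walk u v}
include hc

lemma walkCost_le_sum_mul (h : ∀ e ∈ G.edgeSet, w.edges.count e ≤ m e) :
    walkCost c w ≤ ∑ e ∈ G.edgeFinset, (m e : ℝ) * c e := by
  rw [walkCost_eq_sum_count]
  gcongr with e he
  · exact hc e (mem_edgeFinset.mp he)
  · exact h e (mem_edgeFinset.mp he)

lemma sum_mul_le_walkCost (h : ∀ e ∈ G.edgeSet, m e ≤ w.edges.count e) :
    ∑ e ∈ G.edgeFinset, (m e : ℝ) * c e ≤ walkCost c w := by
  rw [walkCost_eq_sum_count]
  gcongr with e he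
  · exact hc e (mem_edgeFinset.mp he)
  · exact h e (mem_edgeFinset.mp he)

end Cost

section Weights

variable {V : Type*} (G : SimpleGraph V) [Fintype G.edgeSet] [DecidablePred G.IsBridge]

def stemWeight (c : Sym2 V → ℝ) : ℝ :=
  ∑ e ∈ G.edgeFinset.filter (fun e => G.IsBridge e), c e

def cycleWeight (c : Sym2 V → ℝ) : ℝ :=
  ∑ e ∈ G.edgeFinset.filter (fun e => ¬ G.IsBridge e), c e

lemma sum_ite_isBridge_mul (c : Sym2 V → ℝ) :
    ∑ e ∈ G.edgeFinset, ((if G.IsBridge e then 2 else 1 : ℕ) : ℝ) * c e =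
      2 * G.stemWeight c + G.cycleWeight c := by
  rw [stemWeight, cycleWeight, Finset.mul_sum,
    ← Finset.sum_filter_add_sum_filter_not G.edgeFinset (fun e => G.IsBridge e)]
  congr 1 <;> refine Finset.sum_congr rfl fun e he => ?_ <;> simp [(Finset.mem_filter.mp he).2]

lemma sum_ite_eq_mul [DecidableEq V] (c : Sym2 V → ℝ) {f : Sym2 V} (hf : f ∈ G.edgeSet) :
    ∑ e ∈ G.edgeFinset, ((if e = f then 0 else 2 : ℕ) : ℝ) * c e =
      2 * (G.stemWeight c + G.cycleWeight c) - 2 * c f := by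
  have hpt : ∀ e, ((if e = f then 0 else 2 : ℕ) : ℝ) * c e =
      2 * c e - if e = f then 2 * c e else 0 := fun e => by split_ifs <;> simp
  rw [stemWeight, cycleWeight, Finset.sum_filter_add_sum_filter_not, Finset.mul_sum,
    Finset.sum_congr rfl fun e _ => hpt e, Finset.sum_sub_distrib, Finset.sum_ite_eq',
    if_pos (mem_edgeFinset.mpr hf)]

end Weights

section ClosedSpanningWalks

variable {V : Type*} {G : SimpleGraph V} [Finite V] [DecidableEq V] [Fintype G.edgeSet]
  [DecidablePred G.IsBridge] (hG : G.Connected) (hcard : Nat.card G.edgeSet = Nat.card V)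
  {c : Sym2 V → ℝ} (hc : ∀ e ∈ G.edgeSet, 0 ≤ c e)
include hG hcard hc

theorem Connected.le_walkCost {cmax : ℝ} (hcmax : ∀ e ∈ G.edgeSet, ¬ G.IsBridge e → c e ≤ cmax)
    {r : V} {w : G.Walk r r} (hw : ∀ v, v ∈ w.support) :
    2 * G.stemWeight c + min (G.cycleWeight c) (2 * (G.cycleWeight c - cmax)) ≤
      walkCost c w := by
  by_cases hall : ∀ f ∈ G.edgeSet, ¬ G.IsBridge f → f ∈ w.edges
  · have := sum_mul_le_walkCost hc (w := w) (m := fun e => if G.IsBridge e then 2 else 1)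
      fun e he => by
        split_ifs with hb
        · exact w.two_le_count_edges_of_isBridge hw hb
        · exact List.count_pos_iff.mpr (hall e he hb)
    rw [G.sum_ite_isBridge_mul] at this
    linarith [min_le_left (G.cycleWeight c) (2 * (G.cycleWeight c - cmax))]
  · push Not at hall
    obtain ⟨f, hf, hb, hfw⟩ := hall
    have := sum_mul_le_walkCost hc (w := w) (m := fun e => if e = f then 0 else 2)
      fun e he => by
        split_ifs with hef
        · exact Nat.zero_le _
        · exact hG.two_le_count_edges_of_notMem hcard hw hf hb hfw he hef
    rw [G.sum_ite_eq_mul c hf] at this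
    linarith [min_le_right (G.cycleWeight c) (2 * (G.cycleWeight c - cmax)), hcmax f hf hb]

theorem Connected.exists_walkCost_le_stemWeight_add_cycleWeight (s : V) :
    ∃ w : G.Walk s s, (∀ v, v ∈ w.support) ∧
      walkCost c w ≤ 2 * G.stemWeight c + G.cycleWeight c := by
  obtain ⟨w, hw, hcount⟩ := hG.exists_walk_count_edges_le hcard s
  exact ⟨w, hw, (walkCost_le_sum_mul hc fun e _ => hcount e).trans_eq (G.sum_ite_isBridge_mul c)⟩

theorem Connected.exists_walkCost_le_of_not_isBridge (s : V) {f : Sym2 V} (hf : f ∈ G.edgeSet)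
    (hb : ¬ G.IsBridge f) :
    ∃ w : G.Walk s s, (∀ v, v ∈ w.support) ∧
      walkCost c w ≤ 2 * (G.stemWeight c + G.cycleWeight c) - 2 * c f := by
  obtain ⟨w, hw, hcount⟩ := (hG.isTree_deleteEdges hcard hf hb).exists_walk_count_edges_le_two s
  refine ⟨w.mapLe (deleteEdges_le _), by simpa [Walk.support_mapLe_eq_support] using hw,
    (walkCost_le_sum_mul hc fun e _ => ?_).trans_eq (G.sum_ite_eq_mul c hf)⟩
  rw [Walk.edges_mapLe_eq_edges]
  split_ifs with hef
  · subst hef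
    exact (List.count_eq_zero_of_not_mem fun h => by simpa using w.edges_subset_edgeSet h).le
  · exact hcount e

theorem Connected.isLeast_walkCost {cmax : ℝ}
    (hcmax : IsGreatest (c '' {e ∈ G.edgeSet | ¬ G.IsBridge e}) cmax) (s : V) :
    IsLeast {x : ℝ | ∃ w : G.Walk s s, (∀ v, v ∈ w.support) ∧ walkCost c w = x}
      (2 * G.stemWeight c + min (G.cycleWeight c) (2 * (G.cycleWeight c - cmax))) := by
  have hle : ∀ e ∈ G.edgeSet, ¬ G.IsBridge e → c e ≤ cmax :=
    fun e he hb => hcmax.2 ⟨e, ⟨he, hb⟩, rfl⟩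
  refine ⟨?_, fun x ⟨w, hw, hx⟩ => hx ▸ hG.le_walkCost hcard hc hle hw⟩
  suffices ∃ w : G.Walk s s, (∀ v, v ∈ w.support) ∧
      walkCost c w ≤ 2 * G.stemWeight c + min (G.cycleWeight c) (2 * (G.cycleWeight c - cmax)) by
    obtain ⟨w, hw, hwc⟩ := this
    exact ⟨w, hw, le_antisymm hwc (hG.le_walkCost hcard hc hle hw)⟩
  rcases le_total (G.cycleWeight c) (2 * (G.cycleWeight c - cmax)) with h | h
  · obtain ⟨w, hw, hwc⟩ := hG.exists_walkCost_le_stemWeight_add_cycleWeight hcard hc s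
    exact ⟨w, hw, by rwa [min_eq_left h]⟩
  · obtain ⟨f, ⟨hf, hb⟩, rfl⟩ := hcmax.1
    obtain ⟨w, hw, hwc⟩ := hG.exists_walkCost_le_of_not_isBridge hcard hc s hf hb
    exact ⟨w, hw, by rw [min_eq_right h]; linarith⟩

end ClosedSpanningWalks

end SimpleGraph

lemma IsTadpole.card_edgeFinset {V : Type*} [Fintype V] [DecidableEq V] {G : SimpleGraph V}
    [DecidableRel G.Adj] (h : IsTadpole G) : G.edgeFinset.card = Fintype.card V := by
  obtain ⟨-, x, y, hxy, hx, hy, hdeg⟩ := h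
  have hpt : ∀ v, (G.degree v : ℤ) = 2 + (if v = y then 1 else 0) - (if v = x then 1 else 0) := by
    intro v
    by_cases hvx : v = x
    · subst hvx
      simp [hx, hxy]
    by_cases hvy : v = y
    · subst hvy
      simp [hy, hvx]
    simp [hdeg v hvx hvy, hvx, hvy]
  have := congrArg (fun n : ℕ => (n : ℤ)) G.sum_degrees_eq_twice_card_edges
  simp only [Nat.cast_sum, hpt, Finset.sum_sub_distrib, Finset.sum_add_distrib,
    Finset.sum_ite_eq', Finset.mem_univ, if_true, Finset.sum_const, Finset.card_univ,
    nsmul_eq_mul] at this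
  omega

/-- In a tadpole graph with positive edge weights, with `S` the total stem
(bridge) weight, `Ccyc` the total cycle (non-bridge) weight, and `cmax` the
maximum cycle-edge weight, the minimum cost of a closed spanning walk from any
start vertex `s` equals `2 * S + min Ccyc (2 * (Ccyc - cmax))`. -/
theorem stmt_13 {V : Type*} [Fintype V] [DecidableEq V] (G : SimpleGraph V)
    [DecidableRel G.Adj] [DecidablePred G.IsBridge] (htad : IsTadpole G)
    (c : Sym2 V → ℝ) (hc : ∀ e ∈ G.edgeSet, 0 < c e)
    (S : ℝ) (hS : S = ∑ e ∈ G.edgeFinset.filter (fun e => G.IsBridge e), c e)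
    (Ccyc : ℝ) (hCcyc : Ccyc = ∑ e ∈ G.edgeFinset.filter (fun e => ¬ G.IsBridge e), c e)
    (cmax : ℝ) (hcmax : IsGreatest (c '' {e ∈ G.edgeSet | ¬ G.IsBridge e}) cmax)
    (s : V) :
    IsLeast {x : ℝ | ∃ w : G.Walk s s, (∀ v : V, v ∈ w.support) ∧ walkCost c w = x}
      (2 * S + min Ccyc (2 * (Ccyc - cmax))) := by
  have hcard : Nat.card G.edgeSet = Nat.card V := by
    rw [Nat.card_eq_fintype_card, SimpleGraph.edgeFinset_card.symm, htad.card_edgeFinset,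
      Nat.card_eq_fintype_card]
  subst hS hCcyc
  exact htad.1.isLeast_walkCost hcard (fun e he => (hc e he).le) hcmax s
end
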